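/- arXiv:1206.0937 — 4 statements merged into one kernel-verified Lean document; each statement's English description precedes it below -/
import Mathlib

section
/- For any real r > 0 and δ > 0, (e^δ / (1+δ)^(1+δ))^r ≤ exp(- δ² r / (2 + δ)). -/
/-! Taking logarithms, the claim is `r * (δ - (1 + δ) log (1 + δ)) ≤ -r δ² / (2 + δ)`, which follows
from the Padé-type bound `log (1 + δ) ≥ 2δ / (2 + δ)` valid for `δ ≥ 0`. -/

open Real

lemma exp_div_rpow_self_eq_exp {δ : ℝ} (hδ : 0 < 1 + δ) :
    exp δ / (1 + δ) ^ (1 + δ) = exp (δ - (1 + δ) * log (1 + δ)) := by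
  rw [rpow_def_of_pos hδ, mul_comm, ← exp_sub]

lemma sub_mul_log_one_add_le {δ : ℝ} (hδ : 0 ≤ δ) :
    δ - (1 + δ) * log (1 + δ) ≤ -δ ^ 2 / (2 + δ) := by
  have hlog : (1 + δ) * (2 * δ / (δ + 2)) ≤ (1 + δ) * log (1 + δ) :=
    mul_le_mul_of_nonneg_left (le_log_one_add_of_nonneg hδ) (by linarith)
  have hrat : δ - (1 + δ) * (2 * δ / (δ + 2)) = -δ ^ 2 / (2 + δ) := by
    field_simp
    ring
  linarith

theorem chernoff_to_bernstein (r δ : ℝ) (hr : r > 0) (hδ : δ > 0) :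
    (Real.exp δ / (1 + δ) ^ (1 + δ)) ^ r ≤ Real.exp (-(δ ^ 2 * r) / (2 + δ)) := by
  rw [exp_div_rpow_self_eq_exp (by linarith), ← exp_mul, exp_le_exp]
  calc (δ - (1 + δ) * log (1 + δ)) * r ≤ -δ ^ 2 / (2 + δ) * r :=
        mul_le_mul_of_nonneg_right (sub_mul_log_one_add_le hδ.le) hr.le
    _ = -(δ ^ 2 * r) / (2 + δ) := by ring
end

section
/- Let X be hypergeometric (the size of the intersection of a fixed p-subset with a uniformly random p-subset of an n-set) and let Y = Σᵢ₌₁^p zᵢ be a sum of p i.i.d. Bernoulli(p/n) random variables. Then for every t > 0, E[e^{tX}] ≤ E[e^{tY}]. -/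
/-!
Write `exp t = 1 + c` with `c ≥ 0` and expand `(1 + c) ^ |S ∩ S'|` over the subsets
`T ⊆ S ∩ S'`. Both MGFs become `∑_{T ⊆ S'} c ^ |T| · P(T ⊆ S)`: with `m = |T|`, this probability is
`C(n - m, p - m) / C(n, p) = ∏_{i < m} (p - i) / (n - i)` for a uniform `p`-subset `S`, and
`(p / n) ^ m` for independent Bernoulli(`p / n`) coordinates. Since `(p - i) / (n - i) ≤ p / n`,
the comparison holds term by term.
-/

open MeasureTheory Finset
open scoped ENNReal

theorem Nat.descFactorial_mul_pow_le {k n : ℕ} (hkn : k ≤ n) (m : ℕ) :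
    k.descFactorial m * n ^ m ≤ n.descFactorial m * k ^ m := by
  induction m with
  | zero => simp
  | succ m ih =>
    have hstep : (k - m) * n ≤ (n - m) * k := by
      rw [Nat.sub_mul, Nat.sub_mul, Nat.mul_comm k n]
      exact Nat.sub_le_sub_left (Nat.mul_le_mul_left m hkn) _
    calc k.descFactorial (m + 1) * n ^ (m + 1)
        = ((k - m) * n) * (k.descFactorial m * n ^ m) := by rw [Nat.descFactorial_succ]; ring
      _ ≤ ((n - m) * k) * (n.descFactorial m * k ^ m) := Nat.mul_le_mul hstep ih
      _ = n.descFactorial (m + 1) * k ^ (m + 1) := by rw [Nat.descFactorial_succ]; ring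

theorem Nat.choose_sub_mul_pow_le {k n m : ℕ} (hkn : k ≤ n) (hmk : m ≤ k) :
    (n - m).choose (k - m) * n ^ m ≤ n.choose k * k ^ m := by
  have hpos : 0 < m.factorial * n.choose m := by
    have := Nat.choose_pos (hmk.trans hkn); positivity
  refine Nat.le_of_mul_le_mul_right ?_ hpos
  calc (n - m).choose (k - m) * n ^ m * (m.factorial * n.choose m)
      = n.choose m * (n - m).choose (k - m) * m.factorial * n ^ m := by ring
    _ = n.choose k * ((m.factorial * k.choose m) * n ^ m) := by rw [← Nat.choose_mul hmk]; ring
    _ ≤ n.choose k * ((m.factorial * n.choose m) * k ^ m) := by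
        simp only [← Nat.descFactorial_eq_factorial_mul_choose]
        exact Nat.mul_le_mul_left _ (Nat.descFactorial_mul_pow_le hkn m)
    _ = n.choose k * k ^ m * (m.factorial * n.choose m) := by ring

theorem Nat.choose_sub_le_div_pow_mul_choose {k n m : ℕ} (hkn : k ≤ n) (hmk : m ≤ k) :
    ((n - m).choose (k - m) : ℝ) ≤ ((k : ℝ) / n) ^ m * n.choose k := by
  rcases m.eq_zero_or_pos with rfl | hm
  · simp
  have hn : (0 : ℝ) < n := by exact_mod_cast hm.trans_le (hmk.trans hkn)
  rw [div_pow, div_mul_eq_mul_div, le_div_iff₀ (by positivity), mul_comm _ ((n.choose k : ℕ) : ℝ)]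
  exact_mod_cast Nat.choose_sub_mul_pow_le hkn hmk

theorem Finset.sum_powersetCard_pow_card_inter {α R : Type*} [Fintype α] [DecidableEq α]
    [CommSemiring R] (c : R) {k : ℕ} {s : Finset α} (hs : #s ≤ k) :
    ∑ S ∈ univ.powersetCard k, (c + 1) ^ #(S ∩ s)
      = ∑ T ∈ s.powerset, (Fintype.card α - #T).choose (k - #T) * c ^ #T := by
  have hexpand : ∀ S : Finset α, (c + 1) ^ #(S ∩ s) = ∑ T ∈ (S ∩ s).powerset, c ^ #T := by
    intro S
    simpa using (sum_pow_mul_eq_add_pow c 1 (S ∩ s)).symm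
  simp_rw [hexpand]
  rw [sum_comm' (t' := s.powerset) (s' := fun T => (univ.powersetCard k).filter (T ⊆ ·))
    (fun S T => by simp only [mem_powerset, mem_filter, subset_inter_iff]; tauto)]
  refine sum_congr rfl fun T hT => ?_
  rw [sum_const, card_filter_powersetCard_subset T univ k (subset_univ T)
    ((card_le_card (mem_powerset.1 hT)).trans hs), card_univ, nsmul_eq_mul]

set_option linter.deprecated false in
theorem PMF.integral_exp_mul_sum_bernoulli {ι : Type*} [Fintype ι] (q : NNReal) (hq : q ≤ 1)
    (t : ℝ) :
    ∫ z : ι → Bool, Real.exp (t * ∑ i, (if z i then (1 : ℝ) else 0))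
        ∂(Measure.pi fun _ : ι => (PMF.bernoulli q hq).toMeasure)
      = (1 - q + q * Real.exp t) ^ Fintype.card ι := by
  simp_rw [mul_sum, Real.exp_sum]
  rw [integral_fintype_prod_eq_prod (E := fun _ => Bool)
      (fun _ b => Real.exp (t * if b then (1 : ℝ) else 0)), prod_const, card_univ,
    PMF.integral_eq_sum, Fintype.sum_bool]
  simp [PMF.bernoulli_apply, ENNReal.toReal_sub_of_le (ENNReal.coe_le_one_iff.2 hq), add_comm]

/-- Hoeffding's comparison: the MGF of the hypergeometric overlap `|S ∩ S'|` (sampling without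
replacement) is dominated by the MGF of a sum of `p` i.i.d. Bernoulli(`p/n`) variables. -/
theorem hypergeometric_mgf_le_binomial_mgf (n p : ℕ) (hpn : p ≤ n)
    (h : ((p : ℝ≥0∞) / n) ≤ 1) (S' : Finset (Fin n)) (hS' : S'.card = p)
    (t : ℝ) (ht : 0 < t) :
    (∑ S ∈ (Finset.univ : Finset (Fin n)).powersetCard p,
        Real.exp (t * ((S ∩ S').card : ℝ))) / (n.choose p : ℝ)
      ≤ ∫ z : Fin p → Bool,
          Real.exp (t * ∑ i, (if z i then (1 : ℝ) else 0))
          ∂(Measure.pi fun _ : Fin p => (PMF.bernoulli ((p : ℝ≥0∞) / n).toNNReal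
              (by simpa using ENNReal.toNNReal_mono ENNReal.one_ne_top h)).toMeasure) := by
  set c := Real.exp t - 1
  have hc : 0 ≤ c := sub_nonneg.2 (Real.one_le_exp ht.le)
  have hexp : ∀ S : Finset (Fin n), Real.exp (t * #(S ∩ S')) = (c + 1) ^ #(S ∩ S') := by
    simp [c, ← Real.exp_nat_mul, mul_comm]
  have hq : ((((p : ℝ≥0∞) / n).toNNReal : NNReal) : ℝ) = p / n := by simp
  rw [PMF.integral_exp_mul_sum_bernoulli, hq, Fintype.card_fin,
    div_le_iff₀ (by exact_mod_cast Nat.choose_pos hpn), sum_congr rfl fun S _ => hexp S,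
    sum_powersetCard_pow_card_inter c hS'.le, Fintype.card_fin]
  calc ∑ T ∈ S'.powerset, ((n - #T).choose (p - #T) : ℝ) * c ^ #T
      ≤ ∑ T ∈ S'.powerset, ((p : ℝ) / n) ^ #T * n.choose p * c ^ #T := by
        refine sum_le_sum fun T hT => mul_le_mul_of_nonneg_right ?_ (pow_nonneg hc _)
        exact Nat.choose_sub_le_div_pow_mul_choose hpn (hS' ▸ card_le_card (mem_powerset.1 hT))
    _ = ((p : ℝ) / n * c + 1) ^ p * n.choose p := by
        rw [← hS', ← sum_pow_mul_eq_add_pow, sum_mul]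
        refine sum_congr rfl fun T _ => ?_
        rw [one_pow, mul_one, mul_pow]
        ring
    _ = (1 - p / n + p / n * Real.exp t) ^ p * n.choose p := by
        simp only [c]
        ring
end

section
/- (Foster's Theorem) Let G be a connected finite graph on n vertices with combinatorial Laplacian Δ = ∇ᵀ∇. For an edge e = (v,w), define its effective resistance r_e = (δ_v − δ_w)ᵀ Δ† (δ_v − δ_w), where Δ† is the Moore–Penrose pseudoinverse. Then Σ_{e ∈ E(G)} r_e = n − 1. -/
/-!
Since `Δ = Σ_e (δ_v - δ_w)(δ_v - δ_w)ᵀ`, the sum of the effective resistances is `tr (Δ Δ†)`.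
From `Δ Δ† Δ = Δ` the matrix `Δ Δ†` is idempotent of the same rank as `Δ`, so its trace is
`rank Δ`, and for a connected graph the kernel of `Δ` is spanned by the constants,
so `rank Δ = n - 1`.
-/

open Matrix

/-- `Mdag` is the Moore–Penrose pseudoinverse of `M`. -/
def IsMoorePenroseInv {V : Type*} [Fintype V] [DecidableEq V]
    (M Mdag : Matrix V V ℝ) : Prop :=
  M * Mdag * M = M ∧ Mdag * M * Mdag = Mdag ∧
    (M * Mdag)ᵀ = M * Mdag ∧ (Mdag * M)ᵀ = Mdag * M

/-- The effective resistance between `v` and `w`: `(δ_v - δ_w)ᵀ Δ† (δ_v - δ_w)`. -/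
noncomputable def effRes {V : Type*} [Fintype V] [DecidableEq V]
    (Ldag : Matrix V V ℝ) (v w : V) : ℝ :=
  (Pi.single v 1 - Pi.single w 1) ⬝ᵥ Ldag.mulVec (Pi.single v 1 - Pi.single w 1)

/-- The effective resistance as a function of an (undirected) edge. -/
noncomputable def effResSym2 {V : Type*} [Fintype V] [DecidableEq V]
    (Ldag : Matrix V V ℝ) : Sym2 V → ℝ :=
  Sym2.lift ⟨effRes Ldag, by
    intro a b
    unfold effRes
    rw [show (Pi.single b 1 - Pi.single a 1 : V → ℝ) = -(Pi.single a 1 - Pi.single b 1) from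
      (neg_sub _ _).symm]
    rw [Matrix.mulVec_neg, dotProduct_neg, neg_dotProduct, neg_neg]⟩

namespace Matrix

variable {n K : Type*} [Fintype n] [DecidableEq n] [Field K]

theorem trace_eq_rank_of_isIdempotentElem {P : Matrix n n K} (hP : IsIdempotentElem P) :
    P.trace = P.rank := by
  have hP' : IsIdempotentElem (toLin' P) := hP.map toLinAlgEquiv'
  rw [← trace_toLin'_eq, ((LinearMap.isProj_range_iff_isIdempotentElem _).2 hP').trace]
  rfl

theorem trace_mul_eq_rank_of_mul_mul_eq_self {A X : Matrix n n K} (h : A * X * A = A) :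
    (A * X).trace = A.rank := by
  have hidem : IsIdempotentElem (A * X) := by
    rw [IsIdempotentElem, ← Matrix.mul_assoc, h]
  have hrank : (A * X).rank = A.rank := by
    refine le_antisymm (rank_mul_le_left A X) ?_
    calc A.rank = (A * X * A).rank := by rw [h]
      _ ≤ (A * X).rank := rank_mul_le_left _ _
  rw [trace_eq_rank_of_isIdempotentElem hidem, hrank]

end Matrix

namespace SimpleGraph

variable {V : Type*} [Fintype V] (G : SimpleGraph V) [DecidableRel G.Adj]

theorem Connected.card_connectedComponent [DecidableEq V] (h : G.Connected) :
    Fintype.card G.ConnectedComponent = 1 :=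
  have := h.preconnected.subsingleton_connectedComponent
  Fintype.card_eq_one_iff.2 ⟨G.connectedComponentMk h.nonempty.some, fun _ => Subsingleton.elim _ _⟩

theorem rank_lapMatrix_add_card_connectedComponent [DecidableEq V] :
    (G.lapMatrix ℝ).rank + Fintype.card G.ConnectedComponent = Fintype.card V := by
  rw [card_connectedComponent_eq_finrank_ker_toLin'_lapMatrix, Matrix.rank,
    ← Module.finrank_fintype_fun_eq_card (R := ℝ)]
  exact LinearMap.finrank_range_add_finrank_ker _

theorem Connected.rank_lapMatrix [DecidableEq V] (h : G.Connected) :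
    (G.lapMatrix ℝ).rank = Fintype.card V - 1 := by
  have := G.rank_lapMatrix_add_card_connectedComponent
  rw [h.card_connectedComponent] at this
  omega

variable {M : Type*} [AddCommMonoid M]

theorem sum_darts_edge (f : Sym2 V → M) :
    ∑ d : G.Dart, f d.edge = 2 • ∑ e ∈ G.edgeFinset, f e := by
  classical
  rw [← Finset.sum_fiberwise_of_maps_to (g := Dart.edge) (t := G.edgeFinset) (by simp),
    Finset.smul_sum]
  refine Finset.sum_congr rfl fun e he => ?_
  rw [Finset.sum_congr rfl fun d hd => congrArg f (Finset.mem_filter.1 hd).2, Finset.sum_const,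
    G.dart_edge_fiber_card e (G.mem_edgeFinset.1 he)]

theorem sum_darts_eq_sum_neighborFinset (g : V → V → M) :
    ∑ d : G.Dart, g d.fst d.snd = ∑ v, ∑ w ∈ G.neighborFinset v, g v w := by
  simp only [neighborFinset_eq_filter, Finset.sum_filter]
  rw [← Fintype.sum_prod_type', ← Finset.sum_filter]
  exact Finset.sum_bij' (fun d _ => d.toProd) (fun p hp => ⟨p, (Finset.mem_filter.1 hp).2⟩)
    (fun d _ => Finset.mem_filter.2 ⟨Finset.mem_univ _, d.adj⟩) (fun _ _ => Finset.mem_univ _)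
    (fun _ _ => rfl) (fun _ _ => rfl) (fun _ _ => rfl)

theorem trace_lapMatrix_mul {R : Type*} [Ring R] [DecidableEq V] (A : Matrix V V R) :
    (G.lapMatrix R * A).trace = ∑ d : G.Dart, (A d.fst d.fst - A d.snd d.fst) := by
  have hdeg : (G.degMatrix R * A).trace = ∑ d : G.Dart, A d.fst d.fst := by
    rw [G.sum_darts_eq_sum_neighborFinset (fun v _ => A v v)]
    simp [Matrix.trace, degMatrix, card_neighborFinset_eq_degree]
  have hadj : (G.adjMatrix R * A).trace = ∑ d : G.Dart, A d.snd d.fst := by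
    rw [G.sum_darts_eq_sum_neighborFinset (fun v w => A w v)]
    simp [Matrix.trace, adjMatrix_mul_apply]
  rw [lapMatrix, Matrix.sub_mul, Matrix.trace_sub, hdeg, hadj, Finset.sum_sub_distrib]

theorem sum_darts_symm (f : G.Dart → M) : ∑ d : G.Dart, f d.symm = ∑ d, f d :=
  Fintype.sum_equiv (Dart.symm_involutive.toPerm _) _ _ fun _ => rfl

end SimpleGraph

section

variable {V : Type*} [Fintype V] [DecidableEq V]

theorem effRes_eq (Ldag : Matrix V V ℝ) (v w : V) :
    effRes Ldag v w = Ldag v v + Ldag w w - Ldag v w - Ldag w v := by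
  simp only [effRes, mulVec_sub, mulVec_single_one, sub_dotProduct, dotProduct_sub,
    single_dotProduct, col_apply, one_mul]
  ring

theorem sum_edgeFinset_effResSym2 (G : SimpleGraph V) [DecidableRel G.Adj] (Ldag : Matrix V V ℝ) :
    ∑ e ∈ G.edgeFinset, effResSym2 Ldag e = (G.lapMatrix ℝ * Ldag).trace := by
  have h2 : 2 • ∑ e ∈ G.edgeFinset, effResSym2 Ldag e = 2 * (G.lapMatrix ℝ * Ldag).trace := by
    rw [← G.sum_darts_edge, G.trace_lapMatrix_mul, two_mul]
    nth_rw 2 [← G.sum_darts_symm]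
    rw [← Finset.sum_add_distrib]
    refine Finset.sum_congr rfl fun d _ => ?_
    -- `effRes` along `d` is the trace contribution of `d` plus that of its reverse
    change effRes Ldag d.fst d.snd = _
    rw [effRes_eq]
    simp only [SimpleGraph.Dart.symm_toProd, Prod.fst_swap, Prod.snd_swap]
    ring
  rw [nsmul_eq_mul, Nat.cast_ofNat] at h2
  linarith

end

/-- Foster's theorem: in a connected graph on `n` vertices, the effective resistances of the
edges sum to `n - 1`. -/
theorem foster {V : Type*} [Fintype V] [DecidableEq V]
    (G : SimpleGraph V) [DecidableRel G.Adj] (hconn : G.Connected)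
    (Ldag : Matrix V V ℝ) (hdag : IsMoorePenroseInv (G.lapMatrix ℝ) Ldag) :
    ∑ e ∈ G.edgeFinset, effResSym2 Ldag e = (Fintype.card V : ℝ) - 1 := by
  rw [sum_edgeFinset_effResSym2, trace_mul_eq_rank_of_mul_mul_eq_self hdag.1,
    hconn.rank_lapMatrix, Nat.cast_sub (Fintype.card_pos_iff.2 hconn.nonempty), Nat.cast_one]
end

section
/- Let g ∼ N(μ, σ²) be a real Gaussian with μ ≥ 0 and let τ = μ − σ√(2 log(1/δ)) for δ ∈ (0,1). Then P(g ≤ τ) ≤ δ. Consequently, if a fixed coordinate i* of By satisfies (Bx)_{i*} = μ ≥ σ(√(2log(1/δ)) + √(2log(n/δ))), where y = x + ε with ε ∼ N(0,σ²I) and B orthonormal, then P(‖By‖_∞ ≤ σ√(2log(n/δ))) ≤ δ. -/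
/-!
Centred, a Gaussian `N(μ, σ²)` variable has sub-Gaussian moment generating function with
variance proxy `σ²`, so the Chernoff bound puts at most `exp (-a² / 2σ²)` mass below `μ - a`; for
`a = σ √(2 log (1/δ))` this is exactly `δ`. For the second claim, `(B ε)_{i*} = ⟪B_{i*}, ε⟫` is a
sum of independent sub-Gaussian terms with total variance proxy `σ² ‖B_{i*}‖² = σ²`, the rows of an
orthogonal matrix being unit vectors. On the event `‖B y‖_∞ ≤ T` we have
`(B ε)_{i*} ≤ T - (B x)_{i*} ≤ -σ √(2 log (1/δ))`, which again has probability at most `δ`.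
-/

open MeasureTheory ProbabilityTheory
open scoped ENNReal

open Real Matrix
open scoped NNReal

namespace ProbabilityTheory

lemma hasSubgaussianMGF_sub_gaussianReal (μ : ℝ) (v : ℝ≥0) :
    HasSubgaussianMGF (fun x ↦ x - μ) v (gaussianReal μ v) where
  integrable_exp_mul t := by
    simp_rw [mul_sub, Real.exp_sub]
    exact (integrable_exp_mul_gaussianReal t).div_const _
  mgf_le t := by
    rw [mgf_gaussianReal (μ := 0) (by rw [gaussianReal_map_sub_const, sub_self]), zero_mul,
      zero_add]

lemma HasSubgaussianMGF.measureReal_le_le {Ω : Type*} {mΩ : MeasurableSpace Ω} {μ : Measure Ω}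
    {X : Ω → ℝ} {c : ℝ≥0} (h : HasSubgaussianMGF X c μ) {ε : ℝ} (hε : 0 ≤ ε) :
    μ.real {ω | X ω ≤ -ε} ≤ exp (-ε ^ 2 / (2 * c)) := by
  simpa only [Pi.neg_apply, le_neg] using h.neg.measure_ge_le hε

lemma HasSubgaussianMGF.dotProduct_pi {ι : Type*} [Fintype ι] {ν : Measure ℝ}
    [IsProbabilityMeasure ν] {v : ℝ≥0} (h : HasSubgaussianMGF (fun x ↦ x) v ν) (c : ι → ℝ) :
    HasSubgaussianMGF (fun ω : ι → ℝ ↦ c ⬝ᵥ ω) (⟨∑ i, c i ^ 2, by positivity⟩ * v)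
      (Measure.pi fun _ ↦ ν) := by
  have hparam : (⟨∑ i, c i ^ 2, by positivity⟩ * v : ℝ≥0) = ∑ i, ⟨c i ^ 2, sq_nonneg _⟩ * v :=
    NNReal.eq (by push_cast; exact Finset.sum_mul ..)
  rw [hparam]
  refine HasSubgaussianMGF.sum_of_iIndepFun (X := fun i (ω : ι → ℝ) ↦ c i * ω i)
    (iIndepFun_pi (X := fun i (x : ℝ) ↦ c i * x) fun i ↦ by fun_prop) fun i _ ↦ ?_
  refine HasSubgaussianMGF.of_map (X := fun x ↦ c i * x) (Y := fun ω : ι → ℝ ↦ ω i)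
    (measurable_pi_apply i).aemeasurable ?_
  rw [(measurePreserving_eval (fun _ ↦ ν) i).map_eq]
  exact h.const_mul (c i)

end ProbabilityTheory

lemma Matrix.sum_sq_row_eq_one {n : Type*} [Fintype n] [DecidableEq n] {B : Matrix n n ℝ}
    (hB : Bᵀ * B = 1) (i : n) : ∑ j, B i j ^ 2 = 1 := by
  have := congrFun₂ (mul_eq_one_comm.mp hB : B * Bᵀ = 1) i i
  simpa only [mul_apply, transpose_apply, one_apply_eq, ← sq] using this

lemma Matrix.mulVec_apply_le_of_iSup_abs_mulVec_add_le {n : Type*} [Fintype n]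
    {B : Matrix n n ℝ} {x ε : n → ℝ} {T : ℝ} (h : ⨆ i, |(B *ᵥ (x + ε)) i| ≤ T) (i : n) :
    (B *ᵥ ε) i ≤ T - (B *ᵥ x) i := by
  have hi : (B *ᵥ (x + ε)) i ≤ T :=
    (le_abs_self _).trans ((le_ciSup (f := fun i ↦ |(B *ᵥ (x + ε)) i|)
      (Set.finite_range _).bddAbove i).trans h)
  rw [mulVec_add, Pi.add_apply] at hi
  linarith

lemma Real.exp_neg_sq_mul_sqrt_two_log_inv {σ δ : ℝ} (hσ : σ ≠ 0) (hδ0 : 0 < δ) (hδ1 : δ ≤ 1) :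
    exp (-(σ * √(2 * log (1 / δ))) ^ 2 / (2 * σ ^ 2)) = δ := by
  have hlog : 0 ≤ log (1 / δ) := log_nonneg (one_le_one_div hδ0 hδ1)
  rw [mul_pow, sq_sqrt (by positivity), one_div, log_inv]
  convert exp_log hδ0 using 2
  field_simp

/-- Type II error bound (power half of Theorem 3). First, for `g ∼ N(μ, σ²)` with `μ ≥ 0`,
`P(g ≤ μ - σ√(2 log(1/δ))) ≤ δ`. Consequently, if `B` is orthonormal, `y = x + ε` with
`ε ∼ N(0, σ²I)`, and some coordinate of `Bx` is at least
`σ(√(2 log(1/δ)) + √(2 log(n/δ)))`, then `P(‖By‖_∞ ≤ σ√(2 log(n/δ))) ≤ δ`. -/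
theorem type_two_error_bound (n : ℕ) (σ δ : ℝ) (hσ : 0 < σ) (hδ : δ ∈ Set.Ioo (0 : ℝ) 1)
    (B : Matrix (Fin n) (Fin n) ℝ) (hB : B.transpose * B = 1)
    (x : Fin n → ℝ) (istar : Fin n)
    (hsignal : σ * (Real.sqrt (2 * Real.log (1 / δ)) + Real.sqrt (2 * Real.log (n / δ)))
      ≤ B.mulVec x istar) :
    (∀ μ : ℝ, 0 ≤ μ →
      gaussianReal μ ⟨σ ^ 2, sq_nonneg σ⟩
          {t | t ≤ μ - σ * Real.sqrt (2 * Real.log (1 / δ))}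
        ≤ ENNReal.ofReal δ) ∧
    (Measure.pi fun _ : Fin n => gaussianReal 0 ⟨σ ^ 2, sq_nonneg σ⟩)
        {ε | (⨆ i, |B.mulVec (x + ε) i|) ≤ σ * Real.sqrt (2 * Real.log (n / δ))}
      ≤ ENNReal.ofReal δ := by
  obtain ⟨hδ0, hδ1⟩ := hδ
  set v : ℝ≥0 := ⟨σ ^ 2, sq_nonneg σ⟩
  set a := σ * √(2 * log (1 / δ))
  have ha : 0 ≤ a := by positivity
  have hexp : exp (-a ^ 2 / (2 * v)) = δ := exp_neg_sq_mul_sqrt_two_log_inv hσ.ne' hδ0 hδ1.le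
  refine ⟨fun μ _ ↦ ?_, ?_⟩
  · have hlow := (hasSubgaussianMGF_sub_gaussianReal μ v).measureReal_le_le ha
    simp only [sub_le_iff_le_add, neg_add_eq_sub, hexp] at hlow
    exact (ENNReal.le_ofReal_iff_toReal_le (measure_ne_top _ _) hδ0.le).2 hlow
  · have hstd : HasSubgaussianMGF (fun x ↦ x) v (gaussianReal 0 v) := by
      simpa using hasSubgaussianMGF_sub_gaussianReal 0 v
    have hunit : (⟨∑ j, B istar j ^ 2, by positivity⟩ : ℝ≥0) = (1 : ℝ≥0) :=
      NNReal.eq (B.sum_sq_row_eq_one hB istar)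
    have hrow := hstd.dotProduct_pi (B istar)
    rw [hunit, one_mul] at hrow
    have hlow := hrow.measureReal_le_le ha
    rw [hexp] at hlow
    refine (measure_mono fun ε hε ↦ ?_).trans
      ((ENNReal.le_ofReal_iff_toReal_le (measure_ne_top _ _) hδ0.le).2 hlow)
    have hcoord := mulVec_apply_le_of_iSup_abs_mulVec_add_le hε istar
    show (B *ᵥ ε) istar ≤ -a
    linarith
end
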